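/- A threshold vector c* ∈ ℝ^m is a weak Pareto maximum of the set of robust sustainable thresholds S(ξ) if and only if the level-set value W_ξ(c*) equals zero. -/
import Mathlib


/-- Trajectory of the discrete-time control system `x_{k+1} = F_k(x_k, u_k, ω_k)`, `x_0 = ξ`. -/
def traj {X U W : Type*} (F : ℕ → X → U → W → X) (ξ : X) (u : ℕ → U) (w : ℕ → W) : ℕ → X
  | 0 => ξ
  | k + 1 => F k (traj F ξ u w k) (u k) (w k)

/-- `u` is admissible for `(ξ, c)`: for every scenario, the mixed and end-point
constraints hold (componentwise, thresholds `c`). -/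
def Adm {X U W : Type*} {m : ℕ} (N : ℕ) (F : ℕ → X → U → W → X) (Ω : ℕ → Set W)
    (g : ℕ → X → U → Fin m → ℝ) (θ : X → Fin m → ℝ) (ξ : X) (c : Fin m → ℝ)
    (u : ℕ → U) : Prop :=
  ∀ w : ℕ → W, (∀ k, w k ∈ Ω k) →
    (∀ k ≤ N, c ≤ g k (traj F ξ u w k) (u k)) ∧ c ≤ θ (traj F ξ u w (N + 1))

/-- The set of robust sustainable thresholds `S(ξ)`. -/
def SST {X U W : Type*} {m : ℕ} (N : ℕ) (F : ℕ → X → U → W → X) (Ω : ℕ → Set W)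
    (g : ℕ → X → U → Fin m → ℝ) (θ : X → Fin m → ℝ) (ξ : X) : Set (Fin m → ℝ) :=
  {c | ∃ u : ℕ → U, Adm N F Ω g θ ξ c u}


/-- The level-set cost `J^c(u) = inf_w min{ min_{k≤N} Φ^c_k(x_k,u_k), Θ^c(x_{N+1}) }`,
where `Φ^c_k(x,u) = min_i (g^k_i(x,u) - c_i)` and `Θ^c(x) = min_i (θ_i(x) - c_i)`. -/
noncomputable def Jfun {X U W : Type*} {m : ℕ} [NeZero m] (N : ℕ)
    (F : ℕ → X → U → W → X) (Ω : ℕ → Set W)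
    (g : ℕ → X → U → Fin m → ℝ) (θ : X → Fin m → ℝ) (ξ : X) (c : Fin m → ℝ)
    (u : ℕ → U) : ℝ :=
  ⨅ w : {w : ℕ → W // ∀ k, w k ∈ Ω k},
    min ((Finset.Icc 0 N).inf' (Finset.nonempty_Icc.2 (Nat.zero_le N))
          fun k => ⨅ i, (g k (traj F ξ u w.1 k) (u k) i - c i))
        (⨅ i, (θ (traj F ξ u w.1 (N + 1)) i - c i))

/-- The level-set value `W_ξ(c) = max_u J^c(u)`. -/
noncomputable def Wval {X U W : Type*} {m : ℕ} [NeZero m] (N : ℕ)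
    (F : ℕ → X → U → W → X) (Ω : ℕ → Set W)
    (g : ℕ → X → U → Fin m → ℝ) (θ : X → Fin m → ℝ) (ξ : X) (c : Fin m → ℝ) : ℝ :=
  sSup (Set.range (Jfun N F Ω g θ ξ c))


open Filter Topology Set


section USC
variable {α : Type*} [TopologicalSpace α]

lemma usc_comp_cont {β : Type*} [TopologicalSpace β] {f : β → ℝ} (hf : UpperSemicontinuous f)
    {g : α → β} (hg : Continuous g) : UpperSemicontinuous fun x => f (g x) :=
  fun x y hy => (hg.tendsto x).eventually (hf (g x) y hy)

lemma usc_sub_const {f : α → ℝ} (hf : UpperSemicontinuous f) (a : ℝ) :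
    UpperSemicontinuous fun x => f x - a := by
  intro x y hy
  filter_upwards [hf x (y + a) (by simp only at hy; linarith)] with z hz
  linarith

lemma usc_min {f g : α → ℝ} (hf : UpperSemicontinuous f) (hg : UpperSemicontinuous g) :
    UpperSemicontinuous fun x => min (f x) (g x) := by
  intro x y hy
  rcases min_lt_iff.1 hy with h | h
  · filter_upwards [hf x y h] with z hz using lt_of_le_of_lt (min_le_left _ _) hz
  · filter_upwards [hg x y h] with z hz using lt_of_le_of_lt (min_le_right _ _) hz

lemma usc_inf' {ι : Type*} (s : Finset ι) (H : s.Nonempty) {f : ι → α → ℝ}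
    (hf : ∀ k ∈ s, UpperSemicontinuous (f k)) :
    UpperSemicontinuous fun x => s.inf' H fun k => f k x := by
  intro x y hy
  obtain ⟨k, hk, hky⟩ := (Finset.inf'_lt_iff H).1 hy
  filter_upwards [hf k hk x y hky] with z hz using lt_of_le_of_lt (Finset.inf'_le _ hk) hz

lemma usc_max_exists [CompactSpace α] [Nonempty α] {f : α → ℝ}
    (hf : UpperSemicontinuous f) : ∃ x, ∀ y, f y ≤ f x := by
  by_contra h
  push_neg at h
  have hcover : (Set.univ : Set α) ⊆ ⋃ y : α, {x | f x < f y} := by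
    intro x _
    obtain ⟨y, hy⟩ := h x
    exact Set.mem_iUnion.2 ⟨y, hy⟩
  obtain ⟨t, ht⟩ := isCompact_univ.elim_finite_subcover (fun y : α => {x | f x < f y})
    (fun y => hf.isOpen_preimage (f y)) hcover
  have htne : t.Nonempty := by
    rcases Finset.eq_empty_or_nonempty t with rfl | h'
    · simpa using ht (Set.mem_univ (Classical.arbitrary α))
    · exact h'
  obtain ⟨y0, hy0t, hy0⟩ := t.exists_max_image f htne
  obtain ⟨y, hyt, hlt⟩ := Set.mem_iUnion₂.1 (ht (Set.mem_univ y0))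
  exact absurd (hy0 y hyt) (not_le.2 hlt)

end USC

section Helpers
variable {X U W : Type*} {m : ℕ} [NeZero m]

noncomputable def hAux (N : ℕ) (F : ℕ → X → U → W → X)
    (g : ℕ → X → U → Fin m → ℝ) (θ : X → Fin m → ℝ) (ξ : X) (c : Fin m → ℝ)
    (u : ℕ → U) (w : ℕ → W) : ℝ :=
  min ((Finset.Icc 0 N).inf' (Finset.nonempty_Icc.2 (Nat.zero_le N))
        fun k => ⨅ i, (g k (traj F ξ u w k) (u k) i - c i))
      (⨅ i, (θ (traj F ξ u w (N + 1)) i - c i))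

lemma Jfun_eq (N : ℕ) (F : ℕ → X → U → W → X) (Ω : ℕ → Set W)
    (g : ℕ → X → U → Fin m → ℝ) (θ : X → Fin m → ℝ) (ξ : X) (c : Fin m → ℝ) (u : ℕ → U) :
    Jfun N F Ω g θ ξ c u = ⨅ w : {w : ℕ → W // ∀ k, w k ∈ Ω k}, hAux N F g θ ξ c u w.1 := rfl

lemma finm_nonempty : Nonempty (Fin m) := ⟨⟨0, Nat.pos_of_ne_zero (NeZero.ne m)⟩⟩

lemma traj_cont [TopologicalSpace X] [TopologicalSpace U] (F : ℕ → X → U → W → X)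
    (ξ : X) (w : ℕ → W) (hF : ∀ k, Continuous fun p : X × U => F k p.1 p.2 (w k)) :
    ∀ k, Continuous fun u : ℕ → U => traj F ξ u w k := by
  intro k
  induction k with
  | zero => exact continuous_const
  | succ k ih =>
      show Continuous fun u : ℕ → U => F k (traj F ξ u w k) (u k) (w k)
      exact (hF k).comp (ih.prodMk (continuous_apply k))

lemma hAux_lb (N : ℕ) (F : ℕ → X → U → W → X)
    (g : ℕ → X → U → Fin m → ℝ) (θ : X → Fin m → ℝ)
    (hg_bdd : ∀ k i, BddBelow (Set.range fun p : X × U => g k p.1 p.2 i))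
    (hθ_bdd : ∀ i, BddBelow (Set.range fun x => θ x i))
    (ξ : X) (c : Fin m → ℝ) :
    ∃ B : ℝ, ∀ (u : ℕ → U) (w : ℕ → W), B ≤ hAux N F g θ ξ c u w := by
  haveI : Nonempty (Fin m) := finm_nonempty
  choose bg hbg using hg_bdd
  choose bθ hbθ using hθ_bdd
  have hne : (Finset.Icc 0 N).Nonempty := Finset.nonempty_Icc.2 (Nat.zero_le N)
  refine ⟨min ((Finset.Icc 0 N).inf' hne fun k => ⨅ i, (bg k i - c i))
      (⨅ i, (bθ i - c i)), fun u w => ?_⟩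
  have hfin : ∀ (f : Fin m → ℝ), BddBelow (Set.range f) :=
    fun f => (Set.finite_range f).bddBelow
  apply min_le_min
  · refine (Finset.le_inf'_iff hne _).2 fun k hk => ?_
    refine le_trans (Finset.inf'_le _ hk) (le_ciInf fun i => ?_)
    exact le_trans (ciInf_le (hfin _) i)
      (sub_le_sub_right (hbg k i ⟨(traj F ξ u w k, u k), rfl⟩) _)
  · refine le_ciInf fun i => ?_
    exact le_trans (ciInf_le (hfin _) i)
      (sub_le_sub_right (hbθ i ⟨traj F ξ u w (N + 1), rfl⟩) _)

lemma le_hAux_iff (N : ℕ) (F : ℕ → X → U → W → X)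
    (g : ℕ → X → U → Fin m → ℝ) (θ : X → Fin m → ℝ)
    (ξ : X) (c : Fin m → ℝ) (ε : ℝ) (u : ℕ → U) (w : ℕ → W) :
    ε ≤ hAux N F g θ ξ c u w ↔
      (∀ k ≤ N, ∀ i, c i + ε ≤ g k (traj F ξ u w k) (u k) i) ∧
        ∀ i, c i + ε ≤ θ (traj F ξ u w (N + 1)) i := by
  haveI : Nonempty (Fin m) := finm_nonempty
  have hfin : ∀ (f : Fin m → ℝ), BddBelow (Set.range f) :=
    fun f => (Set.finite_range f).bddBelow
  rw [hAux, le_min_iff]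
  apply and_congr
  · rw [Finset.le_inf'_iff]
    constructor
    · intro h k hk i
      have := (h k (Finset.mem_Icc.2 ⟨Nat.zero_le k, hk⟩)).trans (ciInf_le (hfin _) i)
      linarith
    · intro h k hk
      refine le_ciInf fun i => ?_
      have := h k (Finset.mem_Icc.1 hk).2 i
      linarith
  · constructor
    · intro h i
      have := h.trans (ciInf_le (hfin _) i)
      linarith
    · intro h
      refine le_ciInf fun i => ?_
      have := h i
      linarith

lemma le_Jfun_iff (N : ℕ) (F : ℕ → X → U → W → X) (Ω : ℕ → Set W)
    (hΩ : ∀ k, (Ω k).Nonempty)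
    (g : ℕ → X → U → Fin m → ℝ) (θ : X → Fin m → ℝ)
    (hg_bdd : ∀ k i, BddBelow (Set.range fun p : X × U => g k p.1 p.2 i))
    (hθ_bdd : ∀ i, BddBelow (Set.range fun x => θ x i))
    (ξ : X) (c : Fin m → ℝ) (ε : ℝ) (u : ℕ → U) :
    ε ≤ Jfun N F Ω g θ ξ c u ↔
      ∀ w : ℕ → W, (∀ k, w k ∈ Ω k) →
        (∀ k ≤ N, ∀ i, c i + ε ≤ g k (traj F ξ u w k) (u k) i) ∧
          ∀ i, c i + ε ≤ θ (traj F ξ u w (N + 1)) i := by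
  haveI : Nonempty {w : ℕ → W // ∀ k, w k ∈ Ω k} :=
    ⟨⟨fun k => (hΩ k).choose, fun k => (hΩ k).choose_spec⟩⟩
  obtain ⟨B, hB⟩ := hAux_lb N F g θ hg_bdd hθ_bdd ξ c
  rw [Jfun_eq, le_ciInf_iff ⟨B, by rintro _ ⟨w, rfl⟩; exact hB u w.1⟩]
  constructor
  · intro h w hw
    exact (le_hAux_iff N F g θ ξ c ε u w).1 (h ⟨w, hw⟩)
  · intro h w
    exact (le_hAux_iff N F g θ ξ c ε u w.1).2 (h w.1 w.2)

lemma Jfun_usc [TopologicalSpace X] [TopologicalSpace U] (N : ℕ) (F : ℕ → X → U → W → X)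
    (Ω : ℕ → Set W)
    (g : ℕ → X → U → Fin m → ℝ) (θ : X → Fin m → ℝ)
    (hF : ∀ k, ∀ ω ∈ Ω k, Continuous fun p : X × U => F k p.1 p.2 ω)
    (hg_usc : ∀ k i, UpperSemicontinuous fun p : X × U => g k p.1 p.2 i)
    (hg_bdd : ∀ k i, BddBelow (Set.range fun p : X × U => g k p.1 p.2 i))
    (hθ_usc : ∀ i, UpperSemicontinuous fun x => θ x i)
    (hθ_bdd : ∀ i, BddBelow (Set.range fun x => θ x i))
    (ξ : X) (c : Fin m → ℝ) :
    UpperSemicontinuous (Jfun N F Ω g θ ξ c) := by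
  haveI : Nonempty (Fin m) := finm_nonempty
  have hfin : ∀ (f : Fin m → ℝ), BddBelow (Set.range f) :=
    fun f => (Set.finite_range f).bddBelow
  obtain ⟨B, hB⟩ := hAux_lb N F g θ hg_bdd hθ_bdd ξ c
  have : UpperSemicontinuous fun u : ℕ → U =>
      ⨅ w : {w : ℕ → W // ∀ k, w k ∈ Ω k}, hAux N F g θ ξ c u w.1 := by
    refine upperSemicontinuous_ciInf (fun u => ⟨B, by rintro _ ⟨w, rfl⟩; exact hB u w.1⟩)
      fun w => ?_
    have htc := traj_cont F ξ w.1 (fun k => hF k (w.1 k) (w.2 k))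
    refine usc_min (usc_inf' _ _ fun k _ => ?_) ?_
    · refine upperSemicontinuous_ciInf (fun u => hfin _) fun i => ?_
      exact usc_sub_const (usc_comp_cont (hg_usc k i) ((htc k).prodMk (continuous_apply k))) _
    · refine upperSemicontinuous_ciInf (fun u => hfin _) fun i => ?_
      exact usc_sub_const (usc_comp_cont (hθ_usc i) (htc (N + 1))) _
  exact this

lemma Adm_iff_nonneg (N : ℕ) (F : ℕ → X → U → W → X) (Ω : ℕ → Set W)
    (hΩ : ∀ k, (Ω k).Nonempty)
    (g : ℕ → X → U → Fin m → ℝ) (θ : X → Fin m → ℝ)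
    (hg_bdd : ∀ k i, BddBelow (Set.range fun p : X × U => g k p.1 p.2 i))
    (hθ_bdd : ∀ i, BddBelow (Set.range fun x => θ x i))
    (ξ : X) (c : Fin m → ℝ) (u : ℕ → U) :
    Adm N F Ω g θ ξ c u ↔ 0 ≤ Jfun N F Ω g θ ξ c u := by
  rw [le_Jfun_iff N F Ω hΩ g θ hg_bdd hθ_bdd ξ c 0 u]
  unfold Adm
  simp [Pi.le_def]

end Helpers

theorem stmt11 {X U W : Type*} [NormedAddCommGroup X] [NormedSpace ℝ X]
    [FiniteDimensional ℝ X] [MetricSpace U] [CompactSpace U] [Nonempty U]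
    {m N : ℕ} [NeZero m] (F : ℕ → X → U → W → X) (Ω : ℕ → Set W)
    (hΩ : ∀ k, (Ω k).Nonempty)
    (g : ℕ → X → U → Fin m → ℝ) (θ : X → Fin m → ℝ)
    (hF : ∀ k, ∀ ω ∈ Ω k, Continuous fun p : X × U => F k p.1 p.2 ω)
    (hg_usc : ∀ k i, UpperSemicontinuous fun p : X × U => g k p.1 p.2 i)
    (hg_bdd : ∀ k i, BddBelow (Set.range fun p : X × U => g k p.1 p.2 i))
    (hθ_usc : ∀ i, UpperSemicontinuous fun x => θ x i)
    (hθ_bdd : ∀ i, BddBelow (Set.range fun x => θ x i))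
    (ξ : X)
    (cstar : Fin m → ℝ) :
    (cstar ∈ SST N F Ω g θ ξ ∧
      ¬ ∃ c ∈ SST N F Ω g θ ξ, ∀ i, cstar i < c i) ↔
    Wval N F Ω g θ ξ cstar = 0 := by
  haveI : Nonempty (Fin m) := finm_nonempty
  obtain ⟨u0, hu0⟩ := usc_max_exists
    (Jfun_usc N F Ω g θ hF hg_usc hg_bdd hθ_usc hθ_bdd ξ cstar)
  have hWeq : Wval N F Ω g θ ξ cstar = Jfun N F Ω g θ ξ cstar u0 := by
    refine le_antisymm (csSup_le ⟨_, Set.mem_range_self u0⟩ ?_)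
      (le_csSup ⟨Jfun N F Ω g θ ξ cstar u0, ?_⟩ (Set.mem_range_self u0))
    · rintro _ ⟨u, rfl⟩; exact hu0 u
    · rintro _ ⟨u, rfl⟩; exact hu0 u
  constructor
  · rintro ⟨⟨u, hu⟩, hnd⟩
    have h0 : 0 ≤ Jfun N F Ω g θ ξ cstar u :=
      (Adm_iff_nonneg N F Ω hΩ g θ hg_bdd hθ_bdd ξ cstar u).1 hu
    have hge : 0 ≤ Wval N F Ω g θ ξ cstar := hWeq ▸ h0.trans (hu0 u)
    rcases eq_or_lt_of_le hge with h | h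
    · exact h.symm
    · exfalso
      set M := Wval N F Ω g θ ξ cstar with hM
      have hMle : M ≤ Jfun N F Ω g θ ξ cstar u0 := le_of_eq hWeq
      have hkey := (le_Jfun_iff N F Ω hΩ g θ hg_bdd hθ_bdd ξ cstar M u0).1 hMle
      refine hnd ⟨fun i => cstar i + M / 2, ⟨u0, ?_⟩, fun i => by linarith⟩
      intro w hw
      obtain ⟨h1, h2⟩ := hkey w hw
      exact ⟨fun k hk i => by have := h1 k hk i; linarith,
        fun i => by have := h2 i; linarith⟩
  · intro hW
    have hJu0 : Jfun N F Ω g θ ξ cstar u0 = 0 := hWeq ▸ hW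
    refine ⟨⟨u0, (Adm_iff_nonneg N F Ω hΩ g θ hg_bdd hθ_bdd ξ cstar u0).2 hJu0.ge⟩, ?_⟩
    rintro ⟨c, ⟨u, hu⟩, hlt⟩
    set ε := Finset.univ.inf' Finset.univ_nonempty fun i => c i - cstar i with hε
    have hεpos : 0 < ε := (Finset.lt_inf'_iff _).2 fun i _ => by have := hlt i; linarith
    have hc : 0 ≤ Jfun N F Ω g θ ξ c u :=
      (Adm_iff_nonneg N F Ω hΩ g θ hg_bdd hθ_bdd ξ c u).1 hu
    have hc' := (le_Jfun_iff N F Ω hΩ g θ hg_bdd hθ_bdd ξ c 0 u).1 hc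
    have hεle : ε ≤ Jfun N F Ω g θ ξ cstar u := by
      rw [le_Jfun_iff N F Ω hΩ g θ hg_bdd hθ_bdd ξ cstar ε u]
      intro w hw
      obtain ⟨h1, h2⟩ := hc' w hw
      have hεi : ∀ i, ε ≤ c i - cstar i := fun i => Finset.inf'_le _ (Finset.mem_univ i)
      exact ⟨fun k hk i => by have := h1 k hk i; have := hεi i; linarith,
        fun i => by have := h2 i; have := hεi i; linarith⟩
    have : ε ≤ 0 := hJu0 ▸ hεle.trans (hu0 u)
    linarith
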